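/- Let u ∈ ℂⁿ have i.i.d. entries uniformly distributed on the complex unit circle, let w ∈ ℂⁿ be fixed, and let t > 0. Then P(|⟨u,w⟩| ≥ t) ≤ 4 exp(−t²/(4‖w‖₂²)). -/

import Mathlib

/-! Each summand `Re (conj wⱼ * uⱼ)` has mean zero and lies in `[-‖wⱼ‖, ‖wⱼ‖]`, so Hoeffding's lemma
makes it sub-Gaussian with parameter `‖wⱼ‖²`; by independence `Re ⟨u, w⟩` is sub-Gaussian with
parameter `‖w‖₂²`, and so is `Im ⟨u, w⟩ = Re ⟨u, I • w⟩`. As `‖z‖ ≤ √2 max |Re z| |Im z|`, the event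
`t ≤ ‖⟨u, w⟩‖` is covered by the four one-sided events `t / √2 ≤ ±Re, ±Im`, each of probability at
most `exp (-t² / (4 ‖w‖₂²))` by the Chernoff bound. -/

open MeasureTheory ProbabilityTheory Complex
open scoped NNReal

/-- The uniform probability distribution on the complex unit circle. -/
noncomputable def uniformCircle : Measure ℂ :=
  Measure.map (fun θ : ℝ => Complex.exp (2 * Real.pi * θ * Complex.I))
    (volume.restrict (Set.Ico (0 : ℝ) 1))

lemma measurable_exp_two_pi_mul_I : Measurable fun θ : ℝ => exp (2 * Real.pi * θ * I) := by
  fun_prop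

instance isProbabilityMeasure_uniformCircle : IsProbabilityMeasure uniformCircle :=
  have : IsProbabilityMeasure (volume.restrict (Set.Ico (0 : ℝ) 1)) := ⟨by simp⟩
  Measure.isProbabilityMeasure_map measurable_exp_two_pi_mul_I.aemeasurable

lemma ae_norm_eq_one_uniformCircle : ∀ᵐ z ∂uniformCircle, ‖z‖ = 1 :=
  (ae_map_iff measurable_exp_two_pi_mul_I.aemeasurable (measurableSet_eq_fun measurable_norm
    measurable_const)).2 (ae_of_all _ fun θ => by simp [norm_exp])

lemma integral_id_uniformCircle : ∫ z, z ∂uniformCircle = 0 := by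
  have h2πI : 2 * Real.pi * I ≠ 0 := by simp [Real.pi_ne_zero, I_ne_zero]
  rw [uniformCircle, integral_map (f := fun z : ℂ => z) measurable_exp_two_pi_mul_I.aemeasurable
      aestronglyMeasurable_id,
    integral_Ico_eq_integral_Ioo, ← integral_Ioc_eq_integral_Ioo,
    ← intervalIntegral.integral_of_le zero_le_one]
  simp_rw [fun θ : ℝ => show 2 * (Real.pi : ℂ) * θ * I = 2 * Real.pi * I * θ by ring]
  rw [integral_exp_mul_complex h2πI]
  simp

section BoundedMeanZero

variable {Ω : Type*} [MeasurableSpace Ω] {μ : Measure Ω} [IsProbabilityMeasure μ]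

lemma hasSubgaussianMGF_re_conj_mul {X : Ω → ℂ} (hX : AEMeasurable X μ)
    (hbdd : ∀ᵐ ω ∂μ, ‖X ω‖ ≤ 1) (hmean : μ[X] = 0) (c : ℂ) :
    HasSubgaussianMGF (fun ω => (starRingEnd ℂ c * X ω).re) (‖c‖₊ ^ 2) μ := by
  have hint : Integrable X μ := .of_bound hX.aestronglyMeasurable 1 hbdd
  have h := hasSubgaussianMGF_of_mem_Icc_of_integral_eq_zero (a := -‖c‖) (b := ‖c‖)
    (X := fun ω => (starRingEnd ℂ c * X ω).re) (by fun_prop) ?_ ?_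
  · convert h using 2
    ext
    simp [abs_of_nonneg]
  · filter_upwards [hbdd] with ω hω
    have := (abs_re_le_norm (starRingEnd ℂ c * X ω)).trans
      (by simpa using mul_le_of_le_one_right (norm_nonneg c) hω)
    exact abs_le.1 this
  · have := integral_re (hint.const_mul (starRingEnd ℂ c))
    simp only [RCLike.re_to_complex] at this
    rw [this, integral_const_mul, hmean, mul_zero, zero_re]

lemma hasSubgaussianMGF_re_sum_conj_mul {ι : Type*} [Fintype ι] {X : ι → Ω → ℂ}
    (hindep : iIndepFun X μ) (hX : ∀ j, AEMeasurable (X j) μ) (hbdd : ∀ j, ∀ᵐ ω ∂μ, ‖X j ω‖ ≤ 1)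
    (hmean : ∀ j, μ[X j] = 0) (v : ι → ℂ) :
    HasSubgaussianMGF (fun ω => (∑ j, starRingEnd ℂ (v j) * X j ω).re) (∑ j, ‖v j‖₊ ^ 2) μ := by
  simp only [re_sum]
  exact HasSubgaussianMGF.sum_of_iIndepFun
    (hindep.comp (fun j z => (starRingEnd ℂ (v j) * z).re) fun j => by fun_prop)
    fun j _ => hasSubgaussianMGF_re_conj_mul (hX j) (hbdd j) (hmean j) (v j)

lemma hasSubgaussianMGF_im_sum_conj_mul {ι : Type*} [Fintype ι] {X : ι → Ω → ℂ}
    (hindep : iIndepFun X μ) (hX : ∀ j, AEMeasurable (X j) μ) (hbdd : ∀ j, ∀ᵐ ω ∂μ, ‖X j ω‖ ≤ 1)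
    (hmean : ∀ j, μ[X j] = 0) (v : ι → ℂ) :
    HasSubgaussianMGF (fun ω => (∑ j, starRingEnd ℂ (v j) * X j ω).im) (∑ j, ‖v j‖₊ ^ 2) μ := by
  simpa [mul_assoc, ← Finset.mul_sum] using
    hasSubgaussianMGF_re_sum_conj_mul hindep hX hbdd hmean (fun j => I * v j)

end BoundedMeanZero

namespace ProbabilityTheory.HasSubgaussianMGF

variable {Ω : Type*} [MeasurableSpace Ω] {μ : Measure Ω} {c : ℝ≥0}

lemma measure_abs_ge_le {X : Ω → ℝ} (h : HasSubgaussianMGF X c μ) {ε : ℝ} (hε : 0 ≤ ε) :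
    μ.real {ω | ε ≤ |X ω|} ≤ 2 * Real.exp (-ε ^ 2 / (2 * c)) := by
  have hunion : {ω | ε ≤ |X ω|} = {ω | ε ≤ X ω} ∪ {ω | ε ≤ (-X) ω} := by
    ext ω; simp [le_abs', le_neg, or_comm]
  rw [hunion, two_mul]
  exact (measureReal_union_le _ _).trans (add_le_add (h.measure_ge_le hε) (h.neg.measure_ge_le hε))

end ProbabilityTheory.HasSubgaussianMGF

lemma measure_norm_ge_le_of_hasSubgaussianMGF_re_im {Ω : Type*} [MeasurableSpace Ω] {μ : Measure Ω}
    [IsFiniteMeasure μ] {c : ℝ≥0} {Z : Ω → ℂ} (hre : HasSubgaussianMGF (fun ω => (Z ω).re) c μ)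
    (him : HasSubgaussianMGF (fun ω => (Z ω).im) c μ) {t : ℝ} (ht : 0 ≤ t) :
    μ.real {ω | t ≤ ‖Z ω‖} ≤ 4 * Real.exp (-t ^ 2 / (4 * c)) := by
  set ε := t / √2
  have hε : 0 ≤ ε := by positivity
  have hsub : {ω | t ≤ ‖Z ω‖} ⊆ {ω | ε ≤ |(Z ω).re|} ∪ {ω | ε ≤ |(Z ω).im|} := by
    intro ω hω
    have := hω.out.trans (norm_le_sqrt_two_mul_max (Z ω))
    rwa [← div_le_iff₀' (by positivity), le_max_iff] at this
  have hexp : -ε ^ 2 / (2 * c) = -t ^ 2 / (4 * c) := by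
    rw [div_pow, Real.sq_sqrt zero_le_two]; ring
  calc μ.real {ω | t ≤ ‖Z ω‖}
      ≤ μ.real {ω | ε ≤ |(Z ω).re|} + μ.real {ω | ε ≤ |(Z ω).im|} :=
        (measureReal_mono hsub).trans (measureReal_union_le _ _)
    _ ≤ 2 * Real.exp (-ε ^ 2 / (2 * c)) + 2 * Real.exp (-ε ^ 2 / (2 * c)) :=
        add_le_add (hre.measure_abs_ge_le hε) (him.measure_abs_ge_le hε)
    _ = 4 * Real.exp (-t ^ 2 / (4 * c)) := by rw [hexp]; ring

theorem complex_hoeffding_general (n : ℕ) {Ω : Type*} [MeasureSpace Ω]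
    (μ : Measure Ω) [IsProbabilityMeasure μ]
    (u : Fin n → Ω → ℂ) (hmeas : ∀ j, Measurable (u j))
    (hindep : iIndepFun u μ)
    (hdist : ∀ j, μ.map (u j) = uniformCircle)
    (w : Fin n → ℂ) (t : ℝ) (ht : 0 < t) :
    μ {ω | t ≤ ‖∑ j, (starRingEnd ℂ) (w j) * u j ω‖} ≤
      ENNReal.ofReal (4 * Real.exp (-(t ^ 2) / (4 * ∑ j, ‖w j‖ ^ 2))) := by
  have hX : ∀ j, AEMeasurable (u j) μ := fun j => (hmeas j).aemeasurable
  have hbdd : ∀ j, ∀ᵐ ω ∂μ, ‖u j ω‖ ≤ 1 := fun j =>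
    ae_of_ae_map (hX j) ((hdist j).symm ▸ ae_norm_eq_one_uniformCircle.mono fun _ => le_of_eq)
  have hmean : ∀ j, μ[u j] = 0 := fun j => by
    rw [← integral_map (f := fun z : ℂ => z) (hX j) aestronglyMeasurable_id, hdist j,
      integral_id_uniformCircle]
  have h := measure_norm_ge_le_of_hasSubgaussianMGF_re_im
    (hasSubgaussianMGF_re_sum_conj_mul hindep hX hbdd hmean w)
    (hasSubgaussianMGF_im_sum_conj_mul hindep hX hbdd hmean w) ht.le
  rw [← ofReal_measureReal]
  refine ENNReal.ofReal_le_ofReal (h.trans_eq ?_)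
  push_cast
  simp [neg_div]

/-- Complex Hoeffding inequality: if the entries of `u` are i.i.d. uniform on the complex
unit circle, then `P(|⟨u,w⟩| ≥ t) ≤ 4 exp(−t²/(4‖w‖₂²))`. -/
theorem complex_hoeffding (n : ℕ) {Ω : Type*} [MeasureSpace Ω]
    (μ : Measure Ω) [IsProbabilityMeasure μ]
    (u : Fin n → Ω → ℂ) (hmeas : ∀ j, Measurable (u j))
    (hindep : iIndepFun u μ)
    (hdist : ∀ j, μ.map (u j) = uniformCircle)
    (w : Fin n → ℂ) (hw : w ≠ 0) (t : ℝ) (ht : 0 < t) :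
    μ {ω | t ≤ ‖∑ j, (starRingEnd ℂ) (w j) * u j ω‖} ≤
      ENNReal.ofReal (4 * Real.exp (-(t ^ 2) / (4 * ∑ j, ‖w j‖ ^ 2))) :=
  complex_hoeffding_general n μ u hmeas hindep hdist w t ht
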